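/- Let n ≥ 2 and 2 ≤ q ≤ n be integers and c₀, c₄ ∈ ℂ. Define c₁ = √((q+2)(q−1))·((c₄ − c₀)·q(q+1) + 4c₀(n+3)²) / ((n+3)·(2(n+4)(n+2) − (q+2)(q−1))), c₂ = 3(c₀ + c₄)·√((q+2)(q+1)q(q−1)) / (2(n+3)² − q(q+1)), and c₃ = √((q+2)(q−1))·((c₀ − c₄)·q(q+1) + 4c₄(n+3)²) / ((n+3)·(2(n+4)(n+2) − (q+2)(q−1))). Then both denominators are nonzero, and the functions L_j(ρ) = c_j·ρ^n (j = 0,…,4) satisfy, for every ρ > 0: L₁'(ρ) − (√(q(q+1))/(3ρ))·L₂(ρ) + (3/ρ)·L₁(ρ) − (2√((q+2)(q−1))/ρ)·L₀(ρ) = 0; L₂'(ρ) − (3√(q(q+1))/(4ρ))·(L₁(ρ) + L₃(ρ)) + (3/ρ)·L₂(ρ) = 0; and L₃'(ρ) − (√(q(q+1))/(3ρ))·L₂(ρ) + (3/ρ)·L₃(ρ) − (2√((q+2)(q−1))/ρ)·L₄(ρ) = 0. -/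

import Mathlib

/-!
Since `ρ (d/dρ) ρⁿ = n ρⁿ`, the power ansatz `L_j = c_j ρⁿ` turns each equation of the system
into `ρⁿ⁻¹` times a linear relation among the `c_j`, such as
`(n+3) c₁ - (√(q(q+1))/3) c₂ = 2 √((q+2)(q-1)) c₀`. The given coefficients solve these relations
because `√((q+2)(q+1)q(q-1)) = √((q+2)(q-1)) √(q(q+1))` and
`2(n+4)(n+2) - (q+2)(q-1) = 2(n+3)² - q(q+1)`, which is positive when `q ≤ n`.
-/

/-- `√((q+2)(q−1))` as a complex number. -/
noncomputable def sqQA (q : ℕ) : ℂ := (Real.sqrt (((q : ℝ) + 2) * ((q : ℝ) - 1)) : ℝ)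

/-- `√(q(q+1))` as a complex number. -/
noncomputable def sqQB (q : ℕ) : ℂ := (Real.sqrt ((q : ℝ) * ((q : ℝ) + 1)) : ℝ)

/-- `√((q+2)(q+1)q(q−1))` as a complex number. -/
noncomputable def sqQC (q : ℕ) : ℂ :=
  (Real.sqrt (((q : ℝ) + 2) * ((q : ℝ) + 1) * (q : ℝ) * ((q : ℝ) - 1)) : ℝ)

/-- The coefficient `c₁` determined by `c₀, c₄`. -/
noncomputable def c1coef (n q : ℕ) (c0 c4 : ℂ) : ℂ :=
  sqQA q * ((c4 - c0) * (q : ℂ) * ((q : ℂ) + 1) + 4 * c0 * ((n : ℂ) + 3) ^ 2) /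
    (((n : ℂ) + 3) * (2 * ((n : ℂ) + 4) * ((n : ℂ) + 2) - ((q : ℂ) + 2) * ((q : ℂ) - 1)))

/-- The coefficient `c₂` determined by `c₀, c₄`. -/
noncomputable def c2coef (n q : ℕ) (c0 c4 : ℂ) : ℂ :=
  3 * (c0 + c4) * sqQC q / (2 * ((n : ℂ) + 3) ^ 2 - (q : ℂ) * ((q : ℂ) + 1))

/-- The coefficient `c₃` determined by `c₀, c₄`. -/
noncomputable def c3coef (n q : ℕ) (c0 c4 : ℂ) : ℂ :=
  sqQA q * ((c0 - c4) * (q : ℂ) * ((q : ℂ) + 1) + 4 * c4 * ((n : ℂ) + 3) ^ 2) /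
    (((n : ℂ) + 3) * (2 * ((n : ℂ) + 4) * ((n : ℂ) + 2) - ((q : ℂ) + 2) * ((q : ℂ) - 1)))

lemma sqQB_sq (q : ℕ) : sqQB q ^ 2 = (q : ℂ) * ((q : ℂ) + 1) := by
  rw [sqQB, ← Complex.ofReal_pow, Real.sq_sqrt (by positivity)]
  push_cast
  ring

lemma sqQC_eq_sqQA_mul_sqQB (q : ℕ) : sqQC q = sqQA q * sqQB q := by
  rw [sqQC, sqQA, sqQB, ← Complex.ofReal_mul, ← Real.sqrt_mul' _ (by positivity)]
  ring_nf

lemma two_mul_add_four_mul_add_two_sub {R : Type*} [CommRing R] (n q : R) :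
    2 * (n + 4) * (n + 2) - (q + 2) * (q - 1) = 2 * (n + 3) ^ 2 - q * (q + 1) := by
  ring

lemma natCast_add_three_ne_zero (n : ℕ) : (n : ℂ) + 3 ≠ 0 := by
  exact_mod_cast Nat.succ_ne_zero (n + 2)

lemma two_mul_add_three_sq_sub_ne_zero {n q : ℕ} (hqn : q ≤ n) :
    2 * ((n : ℂ) + 3) ^ 2 - (q : ℂ) * ((q : ℂ) + 1) ≠ 0 := by
  have hpos : (0 : ℝ) < 2 * ((n : ℝ) + 3) ^ 2 - (q : ℝ) * ((q : ℝ) + 1) := by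
    have : (q : ℝ) ≤ n := by exact_mod_cast hqn
    nlinarith
  exact_mod_cast hpos.ne'

section Coefficients

variable {n q : ℕ} (c0 c4 : ℂ)

lemma c3coef_eq_c1coef_swap : c3coef n q c0 c4 = c1coef n q c4 c0 := rfl

lemma c2coef_comm : c2coef n q c0 c4 = c2coef n q c4 c0 := by
  rw [c2coef, c2coef, add_comm c0]

variable (hqn : q ≤ n)
include hqn

lemma c1coef_relation :
    ((n : ℂ) + 3) * c1coef n q c0 c4 - sqQB q / 3 * c2coef n q c0 c4 - 2 * sqQA q * c0 = 0 := by
  have hN := natCast_add_three_ne_zero n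
  have hD := two_mul_add_three_sq_sub_ne_zero hqn
  rw [c1coef, c2coef, sqQC_eq_sqQA_mul_sqQB, two_mul_add_four_mul_add_two_sub]
  set D := 2 * ((n : ℂ) + 3) ^ 2 - (q : ℂ) * ((q : ℂ) + 1) with hD_def
  field_simp
  linear_combination (-sqQA q * (c0 + c4)) * sqQB_sq q - 2 * sqQA q * c0 * hD_def

lemma c3coef_relation :
    ((n : ℂ) + 3) * c3coef n q c0 c4 - sqQB q / 3 * c2coef n q c0 c4 - 2 * sqQA q * c4 = 0 := by
  rw [c3coef_eq_c1coef_swap, c2coef_comm]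
  exact c1coef_relation c4 c0 hqn

lemma c2coef_relation :
    ((n : ℂ) + 3) * c2coef n q c0 c4
      - 3 * sqQB q / 4 * (c1coef n q c0 c4 + c3coef n q c0 c4) = 0 := by
  have hN := natCast_add_three_ne_zero n
  have hD := two_mul_add_three_sq_sub_ne_zero hqn
  rw [c1coef, c2coef, c3coef, sqQC_eq_sqQA_mul_sqQB, two_mul_add_four_mul_add_two_sub]
  field_simp
  ring

end Coefficients

lemma deriv_const_mul_ofReal_pow (c : ℂ) (n : ℕ) {ρ : ℝ} (hρ : ρ ≠ 0) :
    deriv (fun r : ℝ => c * (r : ℂ) ^ n) ρ = n * (c * (ρ : ℂ) ^ n) / ρ := by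
  rw [((hasDerivAt_pow n (ρ : ℂ)).comp_ofReal.const_mul c).deriv]
  have hρ' : (ρ : ℂ) ≠ 0 := by exact_mod_cast hρ
  field_simp
  cases n with
  | zero => simp
  | succ k => simp only [Nat.add_sub_cancel, pow_succ]; ring

theorem stmt_9 (n q : ℕ) (hqn : q ≤ n) (c0 c4 : ℂ) :
    (((n : ℂ) + 3) * (2 * ((n : ℂ) + 4) * ((n : ℂ) + 2) - ((q : ℂ) + 2) * ((q : ℂ) - 1)) ≠ 0 ∧
      2 * ((n : ℂ) + 3) ^ 2 - (q : ℂ) * ((q : ℂ) + 1) ≠ 0) ∧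
    ∀ ρ : ℝ, 0 < ρ →
      (deriv (fun r : ℝ => c1coef n q c0 c4 * (r : ℂ) ^ n) ρ
          - sqQB q / (3 * (ρ : ℂ)) * (c2coef n q c0 c4 * (ρ : ℂ) ^ n)
          + 3 / (ρ : ℂ) * (c1coef n q c0 c4 * (ρ : ℂ) ^ n)
          - 2 * sqQA q / (ρ : ℂ) * (c0 * (ρ : ℂ) ^ n) = 0) ∧
      (deriv (fun r : ℝ => c2coef n q c0 c4 * (r : ℂ) ^ n) ρ
          - 3 * sqQB q / (4 * (ρ : ℂ)) *
              (c1coef n q c0 c4 * (ρ : ℂ) ^ n + c3coef n q c0 c4 * (ρ : ℂ) ^ n)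
          + 3 / (ρ : ℂ) * (c2coef n q c0 c4 * (ρ : ℂ) ^ n) = 0) ∧
      (deriv (fun r : ℝ => c3coef n q c0 c4 * (r : ℂ) ^ n) ρ
          - sqQB q / (3 * (ρ : ℂ)) * (c2coef n q c0 c4 * (ρ : ℂ) ^ n)
          + 3 / (ρ : ℂ) * (c3coef n q c0 c4 * (ρ : ℂ) ^ n)
          - 2 * sqQA q / (ρ : ℂ) * (c4 * (ρ : ℂ) ^ n) = 0) := by
  have hD := two_mul_add_three_sq_sub_ne_zero hqn
  refine ⟨⟨?_, hD⟩, fun ρ hρ => ?_⟩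
  · rw [two_mul_add_four_mul_add_two_sub]
    exact mul_ne_zero (natCast_add_three_ne_zero n) hD
  simp only [deriv_const_mul_ofReal_pow _ n hρ.ne']
  refine ⟨?_, ?_, ?_⟩
  · linear_combination ((ρ : ℂ) ^ n / ρ) * c1coef_relation c0 c4 hqn
  · linear_combination ((ρ : ℂ) ^ n / ρ) * c2coef_relation c0 c4 hqn
  · linear_combination ((ρ : ℂ) ^ n / ρ) * c3coef_relation c0 c4 hqn
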